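/- Let K ≥ 1, let p_1,…,p_K ∈ [0,1) with p̄_k = 1 − p_k, and let λ_1,…,λ_K > 0. Define α_k = λ_k / (Σ_j λ_j). Consider the probability vector π on states {0,1,…,K} given by π_0 = (Σ_k λ_k)/(Σ_k λ_k/p̄_k) and π_k = (λ_k p_k / p̄_k)/(Σ_j λ_j/p̄_j) for k = 1,…,K. Then π is a stationary distribution of the Markov chain with transition probabilities P(0,0) = 1 − Σ_k α_k p_k, P(0,k) = α_k p_k, P(k,0) = p̄_k, P(k,k) = p_k, and P(k,l) = 0 for distinct k,l ≥ 1; that is, π satisfies πP = π and Σ_i π_i = 1. -/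

import Mathlib

/-!
The chain is a star: state 0 is joined to each blocked state k, and nothing else. For such a chain
the balance equations reduce to the cut equations `π_k (1 - p_k) = π_0 P(0,k)`, one per edge, and the
balance at state 0 is their sum. For the given `π` both sides of the cut equation at `k` equal
`λ_k p_k / Σ_j λ_j/p̄_j`; normalization is `λ_k + λ_k p_k / p̄_k = λ_k / p̄_k`.
-/

open Finset

section StarChain

variable {ι : Type*} [Fintype ι] (P : Option ι → Option ι → ℝ) (q p : ι → ℝ) (π : Option ι → ℝ)

lemma sum_mul_star_none (hP0 : P none none = 1 - ∑ k, q k) (hPk0 : ∀ k, P (some k) none = 1 - p k) :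
    ∑ i, π i * P i none = π none * (1 - ∑ k, q k) + ∑ k, π (some k) * (1 - p k) := by
  simp only [Fintype.sum_option, hP0, hPk0]

lemma sum_mul_star_some (hP0k : ∀ k, P none (some k) = q k) (hPkk : ∀ k, P (some k) (some k) = p k)
    (hPkl : ∀ k l, k ≠ l → P (some k) (some l) = 0) (k : ι) :
    ∑ i, π i * P i (some k) = π none * q k + π (some k) * p k := by
  rw [Fintype.sum_option, hP0k, Fintype.sum_eq_single k fun l hl => by rw [hPkl l k hl, mul_zero],
    hPkk]

theorem star_stationary_of_cut_balance (hP0 : P none none = 1 - ∑ k, q k)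
    (hP0k : ∀ k, P none (some k) = q k) (hPk0 : ∀ k, P (some k) none = 1 - p k)
    (hPkk : ∀ k, P (some k) (some k) = p k) (hPkl : ∀ k l, k ≠ l → P (some k) (some l) = 0)
    (hcut : ∀ k, π (some k) * (1 - p k) = π none * q k) :
    ∀ j, ∑ i, π i * P i j = π j
  | none => by
    rw [sum_mul_star_none P q p π hP0 hPk0, sum_congr rfl fun k _ => hcut k, ← mul_sum]
    ring
  | some k => by
    rw [sum_mul_star_some P q p π hP0k hPkk hPkl, ← hcut k]
    ring

end StarChain

lemma add_mul_div_one_sub {l x : ℝ} (hx : 1 - x ≠ 0) : l + l * x / (1 - x) = l / (1 - x) := by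
  field_simp
  ring

theorem stmt_0 (K : ℕ) (hK : 1 ≤ K) (p lam : Fin K → ℝ)
    (hp : ∀ k, 0 ≤ p k ∧ p k < 1) (hlam : ∀ k, 0 < lam k)
    (α : Fin K → ℝ) (hα : ∀ k, α k = lam k / ∑ j, lam j)
    (π : Option (Fin K) → ℝ)
    (hπ0 : π none = (∑ k, lam k) / (∑ k, lam k / (1 - p k)))
    (hπk : ∀ k, π (some k) = (lam k * p k / (1 - p k)) / (∑ j, lam j / (1 - p j)))
    (P : Option (Fin K) → Option (Fin K) → ℝ)
    (hP00 : P none none = 1 - ∑ k, α k * p k)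
    (hP0k : ∀ k, P none (some k) = α k * p k)
    (hPk0 : ∀ k, P (some k) none = 1 - p k)
    (hPkk : ∀ k, P (some k) (some k) = p k)
    (hPkl : ∀ k l, k ≠ l → P (some k) (some l) = 0) :
    (∑ i, π i = 1) ∧ (∀ j, ∑ i, π i * P i j = π j) := by
  have : Nonempty (Fin K) := ⟨⟨0, hK⟩⟩
  have hp' : ∀ k, 0 < 1 - p k := fun k => sub_pos.2 (hp k).2
  have hS : ∑ j, lam j ≠ 0 := (sum_pos (fun j _ => hlam j) univ_nonempty).ne'
  have hD : ∑ j, lam j / (1 - p j) ≠ 0 :=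
    (sum_pos (fun j _ => div_pos (hlam j) (hp' j)) univ_nonempty).ne'
  refine ⟨?_, star_stationary_of_cut_balance P (fun k => α k * p k) p π hP00 hP0k hPk0 hPkk hPkl
    fun k => ?_⟩
  · rw [Fintype.sum_option, hπ0, sum_congr rfl fun k _ => hπk k, ← sum_div, ← add_div,
      ← sum_add_distrib, sum_congr rfl fun k _ => add_mul_div_one_sub (hp' k).ne', div_self hD]
  · have := (hp' k).ne'
    rw [hπk, hπ0, hα]
    field_simp
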